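/- The topological centre of the enveloping semigroup E(𝕋^{ℤ≥0}, t) is exactly {t^n : n ∈ ℤ}; equivalently, an element φ ∈ (𝓗, ⋆) has continuous left translation ψ ↦ φ ⋆ ψ on 𝓗 if and only if φ = ñ for some n ∈ ℤ. -/

import Mathlib

noncomputable section

/-- The circle group 𝕋. -/
abbrev 𝕋 := Circle

/-- Generalised binomial coefficient `C(n,k)` for integer `n`. -/
def gchoose (n : ℤ) (k : ℕ) : ℤ := Ring.choose n k

/-- Signed Stirling numbers of the first kind, `s(k,j)`, determined by
`k! · C(n,k) = Σ_{j=0}^k s(k,j) n^j`. -/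
def stir : ℕ → ℕ → ℤ
  | 0, 0 => 1
  | 0, _ + 1 => 0
  | _ + 1, 0 => 0
  | k + 1, j + 1 => stir k j - (k : ℤ) * stir k (j + 1)

/-- `H(𝕋)`: the set of (not necessarily continuous) group homomorphisms 𝕋 → 𝕋,
as a subset of the product space `𝕋 → 𝕋` (pointwise convergence topology). -/
def HSet : Set (𝕋 → 𝕋) := {f | ∀ x y : 𝕋, f (x * y) = f x * f y}

/-- `𝕋_Q`: the torsion subgroup of 𝕋. -/
def TQ : Set 𝕋 := {x | ∃ n : ℕ, 0 < n ∧ x ^ n = 1}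

/-- The space 𝓗 ⊆ H(𝕋)^{ℤ≥0}: sequences satisfying (H.0) and (H.∞). -/
def Hcal : Set (ℕ → 𝕋 → 𝕋) :=
  {φ | (∀ k, φ k ∈ HSet) ∧ φ 0 = (fun x => x) ∧
    ∀ k, 1 ≤ k → ∀ x ∈ TQ,
      φ k (x ^ Nat.factorial k) = ∏ j ∈ Finset.Icc 1 k, (φ 1)^[j] (x ^ stir k j)}

/-- The element `ñ` (whose `k`-th entry is `C(n,k)^×`), for `n : ℤ`. -/
def ntil (n : ℤ) : ℕ → 𝕋 → 𝕋 := fun k x => x ^ gchoose n k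

/-- The homeomorphism `T` of `H(𝕋)^{ℤ≥0}`: `T(φ) = (φ_0, φ_0φ_1, φ_1φ_2, …)`. -/
def Tmap (φ : ℕ → 𝕋 → 𝕋) : ℕ → 𝕋 → 𝕋 :=
  fun k => match k with
  | 0 => φ 0
  | k + 1 => fun x => φ k x * φ (k + 1) x

/-- The group operation ⋆ on 𝓗: `(φ ⋆ ψ)_k = ∏_{j=0}^k φ_{k-j} ∘ ψ_j`. -/
def hmul (φ ψ : ℕ → 𝕋 → 𝕋) : ℕ → 𝕋 → 𝕋 :=
  fun k x => ∏ j ∈ Finset.range (k + 1), φ (k - j) (ψ j x)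

/-!
If `φ = ñ`, then `(φ ⋆ ψ)_k = ∏_j ψ_j^{C(n, k-j)}` depends continuously on `ψ`.

Conversely, `ℚ` is divisible and `exp 1` has infinite order in `𝕋`, so some additive character
`q : 𝕋 → ℚ` has `q (exp 1) = 1`; it vanishes on `𝕋_Q`. Hence `ψ_θ = (1^×, exp (θ q), 0^×, …)`
lies in `𝓗` for every `θ ∈ ℝ`, depends continuously on `θ`, and
`(φ ⋆ ψ_θ)_{m+1} (exp 1) = φ_m (exp θ) · φ_{m+1} (exp 1)`. So `θ ↦ φ_m (exp θ)` is a continuous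
homomorphism `ℝ → 𝕋`; lifting it through the covering `exp : ℝ → 𝕋` gives a continuous additive,
hence linear, map `ℝ → ℝ`, so `φ_m` is a power map `y ↦ y ^ n_m`. Finally (H.∞) on `𝕋_Q`, with
`∑_j s(k,j) n^j = k! C(n,k)`, forces `n_k = C(n_1, k)`.
-/

open Finset Real

lemma stir_eq_zero_of_lt : ∀ {k j : ℕ}, k < j → stir k j = 0
  | 0, _ + 1, _ => rfl
  | k + 1, j + 1, h => by
    rw [stir, stir_eq_zero_of_lt (by omega), stir_eq_zero_of_lt (by omega), mul_zero, sub_zero]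

lemma sum_stir_mul_pow_eq_descPochhammer_eval (k : ℕ) (n : ℤ) :
    ∑ j ∈ range (k + 1), stir k j * n ^ j = (descPochhammer ℤ k).eval n := by
  induction k with
  | zero => simp [stir]
  | succ k ih =>
    have hk : (k : ℤ) * stir k 0 = 0 := by cases k <;> simp [stir]
    have hshift := sum_range_succ' (fun j => stir k j * n ^ j) (k + 1)
    rw [sum_range_succ, stir_eq_zero_of_lt k.lt_succ_self, zero_mul, add_zero, pow_zero,
      mul_one] at hshift
    rw [descPochhammer_succ_eval, ← ih, sum_range_succ']
    simp only [stir, sub_mul, sum_sub_distrib, mul_assoc, ← mul_sum]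
    have hmul : ∑ j ∈ range (k + 1), stir k j * n ^ (j + 1)
        = (∑ j ∈ range (k + 1), stir k j * n ^ j) * n := by
      simp only [sum_mul, pow_succ, mul_assoc]
    linear_combination hmul + hk + (k : ℤ) * hshift

lemma sum_Icc_stir_mul_pow {k : ℕ} (hk : 1 ≤ k) (n : ℤ) :
    ∑ j ∈ Icc 1 k, stir k j * n ^ j = k.factorial * gchoose n k := by
  have h := sum_range_eq_add_Ico (fun j => stir k j * n ^ j) (by omega : 0 < k + 1)
  obtain ⟨k, rfl⟩ := Nat.exists_eq_add_of_le' hk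
  rw [Ico_add_one_right_eq_Icc, sum_stir_mul_pow_eq_descPochhammer_eval] at h
  rw [gchoose, ← nsmul_eq_mul, ← Ring.descPochhammer_eq_factorial_smul_choose,
    ← Polynomial.eval_eq_smeval, h]
  simp [stir]

lemma Finset.prod_zpow_eq_zpow_sum {G ι : Type*} [CommGroup G] (s : Finset ι) (x : G)
    (f : ι → ℤ) : ∏ i ∈ s, x ^ f i = x ^ ∑ i ∈ s, f i := by
  simpa [← ofAdd_sum] using (map_prod (zpowersHom G x) (Multiplicative.ofAdd ∘ f) s).symm

lemma exists_addMonoidHom_rat_eq_one {A : Type*} [AddCommGroup A] {a : A}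
    (ha : ¬ IsOfFinAddOrder a) : ∃ q : A →+ ℚ, q a = 1 := by
  obtain ⟨q, hq⟩ := Module.Baer.extension_property_addMonoidHom (Module.Baer.of_divisible ℚ)
    (zmultiplesHom A a) (injective_zsmul_iff_not_isOfFinAddOrder.mpr ha) (Int.castAddHom ℚ)
  exact ⟨q, by simpa using DFunLike.congr_fun hq 1⟩

namespace Circle

lemma not_isOfFinOrder_exp_one : ¬ IsOfFinOrder (exp 1) := by
  rw [isOfFinOrder_iff_pow_eq_one]
  rintro ⟨n, hn, h⟩
  rw [← exp_natCast_mul, mul_one, exp_eq_one] at h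
  obtain ⟨m, hm⟩ := h
  have hm0 : (m : ℝ) ≠ 0 := by rintro h0; rw [h0, zero_mul] at hm; norm_cast at hm; omega
  refine irrational_pi ⟨n / (2 * m), ?_⟩
  push_cast
  field_simp
  linarith

lemma isPrimitiveRoot_exp (N : ℕ) (hN : N ≠ 0) : IsPrimitiveRoot (exp (2 * π / N)) N := by
  refine IsPrimitiveRoot.of_map_of_injective (f := coeHom) ?_ Subtype.val_injective
  convert Complex.isPrimitiveRoot_exp N hN using 2
  change Complex.exp _ = _
  push_cast
  ring_nf

lemma eq_zero_of_forall_isOfFinOrder_zpow_eq_one {d : ℤ}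
    (h : ∀ x : Circle, IsOfFinOrder x → x ^ d = 1) : d = 0 := by
  have hζ := isPrimitiveRoot_exp (d.natAbs + 1) (by omega)
  have hdvd := hζ.zpow_eq_one_iff_dvd d |>.mp (h _ (hζ.isOfFinOrder (by omega)))
  exact Int.eq_zero_of_dvd_of_natAbs_lt_natAbs hdvd (by omega)

lemma exists_zpow_of_continuous_comp_exp (f : Circle →* Circle) (hf : Continuous (f ∘ exp)) :
    ∃ n : ℤ, ∀ y, f y = y ^ n := by
  obtain ⟨F, ⟨-, hF⟩, hFuniq⟩ :=
    isCoveringMap_exp.existsUnique_continuousMap_lifts ⟨f ∘ exp, hf⟩ 0 0 (by simp)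
  have hFapply (θ : ℝ) : exp (F θ) = f (exp θ) := congr_fun hF θ
  -- `b ↦ F (a + b) - F a` is another lift of `f ∘ exp` vanishing at `0`.
  have hadd (a b : ℝ) : F (a + b) = F a + F b := by
    let G : C(ℝ, ℝ) := ⟨fun b => F (a + b) - F a, by fun_prop⟩
    have hG : G = F := hFuniq G ⟨by simp [G], funext fun b => by
      simp [G, hFapply, exp_add]⟩
    have h := congr($hG b)
    simp only [G, ContinuousMap.coe_mk] at h
    linarith
  have hlin (θ : ℝ) : F θ = θ * F 1 := by
    simpa using map_real_smul (AddMonoidHom.mk' F hadd) F.continuous θ 1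
  obtain ⟨n, hn⟩ : ∃ n : ℤ, F (2 * π) = n * (2 * π) := by
    rw [← exp_eq_one, hFapply, exp_two_pi, map_one]
  have hF1 : F 1 = n := by
    rw [hlin] at hn
    exact mul_left_cancel₀ two_pi_pos.ne' (by linarith)
  refine ⟨n, fun y => ?_⟩
  obtain ⟨θ, rfl⟩ := exp_surjective y
  rw [← hFapply, hlin, hF1, ← exp_intCast_mul, mul_comm]

end Circle

lemma mem_TQ_iff {x : 𝕋} : x ∈ TQ ↔ IsOfFinOrder x := isOfFinOrder_iff_pow_eq_one.symm

def HSet.toMonoidHom {f : 𝕋 → 𝕋} (hf : f ∈ HSet) : 𝕋 →* 𝕋 := MonoidHom.mk' f hf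

lemma HSet.map_one {f : 𝕋 → 𝕋} (hf : f ∈ HSet) : f 1 = 1 := _root_.map_one (HSet.toMonoidHom hf)

/-- The sequence `(1^×, χ, 0^×, 0^×, …)`. -/
def ofFirst (χ : 𝕋 → 𝕋) : ℕ → 𝕋 → 𝕋
  | 0 => fun x => x
  | 1 => χ
  | _ + 2 => fun _ => 1

lemma ofFirst_mem_Hcal {χ : 𝕋 → 𝕋} (hχ : χ ∈ HSet) (htors : ∀ x ∈ TQ, χ x = 1) :
    ofFirst χ ∈ Hcal := by
  refine ⟨fun k => ?_, rfl, fun k hk x hx => ?_⟩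
  · rcases k with _ | _ | k
    exacts [fun _ _ => rfl, hχ, fun _ _ => (mul_one 1).symm]
  · have hiter (j : ℕ) (hj : j ∈ Icc 1 k) : χ^[j] (x ^ stir k j) = 1 := by
      obtain ⟨i, rfl⟩ := Nat.exists_eq_add_of_le' (mem_Icc.mp hj).1
      rw [Function.iterate_succ_apply, htors _ (mem_TQ_iff.mpr (mem_TQ_iff.mp hx).zpow)]
      exact Function.iterate_fixed (HSet.map_one hχ) i
    change _ = ∏ j ∈ Icc 1 k, χ^[j] _
    rw [prod_eq_one hiter]
    rcases k with _ | _ | k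
    exacts [absurd hk (by omega), htors _ (by simpa using hx), rfl]

lemma continuous_ofFirst {X : Type*} [TopologicalSpace X] {χ : X → 𝕋 → 𝕋} (hχ : Continuous χ) :
    Continuous fun a => ofFirst (χ a) := by
  refine continuous_pi fun k => ?_
  rcases k with _ | _ | k
  exacts [continuous_const, hχ, continuous_const]

lemma hmul_ofFirst_succ {φ : ℕ → 𝕋 → 𝕋} (hφ : ∀ k, φ k 1 = 1) (χ : 𝕋 → 𝕋) (m : ℕ) (x : 𝕋) :
    hmul φ (ofFirst χ) (m + 1) x = φ m (χ x) * φ (m + 1) x := by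
  simp only [hmul]
  rw [prod_range_succ', prod_range_succ']
  simp [ofFirst, hφ, mul_comm]

def expChar (q : Additive 𝕋 →+ ℚ) (θ : ℝ) : 𝕋 → 𝕋 :=
  fun y => Circle.exp (θ * q (Additive.ofMul y))

lemma expChar_mem_HSet (q : Additive 𝕋 →+ ℚ) (θ : ℝ) : expChar q θ ∈ HSet := by
  intro x y
  simp only [expChar, ← Circle.exp_add, ofMul_mul, map_add, Rat.cast_add, mul_add]

lemma expChar_eq_one_of_mem_TQ (q : Additive 𝕋 →+ ℚ) (θ : ℝ) {x : 𝕋} (hx : x ∈ TQ) :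
    expChar q θ x = 1 := by
  have : q (Additive.ofMul x) = 0 :=
    (q.isOfFinAddOrder (isOfFinAddOrder_ofMul_iff.mpr (mem_TQ_iff.mp hx))).eq_zero'
  simp [expChar, this]

lemma continuous_expChar (q : Additive 𝕋 →+ ℚ) : Continuous (expChar q) :=
  continuous_pi fun _ => by unfold expChar; fun_prop

lemma continuous_comp_exp_of_continuous_hmul {φ : ℕ → 𝕋 → 𝕋} (hφ : φ ∈ Hcal)
    (hcont : Continuous fun ψ : ↥Hcal => hmul φ ↑ψ) (m : ℕ) :
    Continuous fun θ => φ m (Circle.exp θ) := by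
  obtain ⟨q, hq⟩ := exists_addMonoidHom_rat_eq_one
    (isOfFinAddOrder_ofMul_iff.not.mpr Circle.not_isOfFinOrder_exp_one)
  let Ψ : ℝ → Hcal := fun θ => ⟨ofFirst (expChar q θ),
    ofFirst_mem_Hcal (expChar_mem_HSet q θ) fun _ => expChar_eq_one_of_mem_TQ q θ⟩
  have hΨ : Continuous Ψ := (continuous_ofFirst (continuous_expChar q)).subtype_mk _
  have heval (θ : ℝ) : hmul φ (Ψ θ) (m + 1) (Circle.exp 1)
      = φ m (Circle.exp θ) * φ (m + 1) (Circle.exp 1) := by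
    rw [hmul_ofFirst_succ fun k => HSet.map_one (hφ.1 k)]
    simp [expChar, hq]
  have h : Continuous fun θ => hmul φ (Ψ θ) (m + 1) (Circle.exp 1) :=
    (continuous_apply _).comp ((continuous_apply _).comp (hcont.comp hΨ))
  have hquot : (fun θ => φ m (Circle.exp θ))
      = fun θ => hmul φ (Ψ θ) (m + 1) (Circle.exp 1) * (φ (m + 1) (Circle.exp 1))⁻¹ :=
    funext fun θ => by rw [heval, mul_inv_cancel_right]
  rw [hquot]
  exact h.mul continuous_const

lemma eq_ntil_of_forall_eq_zpow {φ : ℕ → 𝕋 → 𝕋} (hφ : φ ∈ Hcal)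
    (hpow : ∀ k, ∃ nk : ℤ, ∀ y, φ k y = y ^ nk) : ∃ n : ℤ, φ = ntil n := by
  choose e he using hpow
  refine ⟨e 1, funext fun k => ?_⟩
  rcases Nat.eq_zero_or_pos k with rfl | hk
  · rw [hφ.2.1]
    funext y
    simp [ntil, gchoose]
  -- (H.∞) turns into `x ^ (k! e k) = x ^ (k! C(e 1, k))` on `𝕋_Q`
  have htors (x : 𝕋) (hx : IsOfFinOrder x) :
      x ^ ((k.factorial : ℤ) * e k - k.factorial * gchoose (e 1) k) = 1 := by
    have h := hφ.2.2 k hk x (mem_TQ_iff.mpr hx)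
    have h1 : φ 1 = fun y => y ^ e 1 := funext (he 1)
    simp only [h1, zpow_iterate, he k, ← zpow_natCast, ← zpow_mul, prod_zpow_eq_zpow_sum] at h
    rw [zpow_sub, h, ← sum_Icc_stir_mul_pow hk, mul_inv_eq_one]
  have hek := sub_eq_zero.mp (Circle.eq_zero_of_forall_isOfFinOrder_zpow_eq_one htors)
  funext y
  rw [he, ntil, mul_left_cancel₀ (by positivity) hek]

lemma continuous_hmul_ntil (n : ℤ) : Continuous fun ψ : ↥Hcal => hmul (ntil n) ↑ψ :=
  continuous_pi fun _ => continuous_pi fun x => continuous_finsetProd _ fun j _ =>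
    ((continuous_apply x).comp ((continuous_apply j).comp continuous_subtype_val)).zpow _

/-- The topological centre of `E(𝕋^{ℤ≥0}, t) ≅ (𝓗, ⋆)` is `{t^n : n ∈ ℤ}`:
an element `φ ∈ 𝓗` has continuous left translation `ψ ↦ φ ⋆ ψ` on 𝓗 if and
only if `φ = ñ` for some `n ∈ ℤ`. -/
theorem stmt5 (φ : ℕ → 𝕋 → 𝕋) (hφ : φ ∈ Hcal) :
    Continuous (fun ψ : ↥Hcal => hmul φ ↑ψ) ↔ ∃ n : ℤ, φ = ntil n := by
  refine ⟨fun hcont => eq_ntil_of_forall_eq_zpow hφ fun k => ?_, ?_⟩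
  · exact Circle.exists_zpow_of_continuous_comp_exp (HSet.toMonoidHom (hφ.1 k))
      (continuous_comp_exp_of_continuous_hmul hφ hcont k)
  · rintro ⟨n, rfl⟩
    exact continuous_hmul_ntil n
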